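/- If x is an upper (resp. lower) characteristic Sturmian word, then S(L_0(x)) and S(L_1(x)) are both upper (resp. lower) characteristic Sturmian words. -/

import Mathlib

open scoped ENat Classical

/-- The length-`n` factor of the bi-infinite word `x` starting at position `i`. -/
def subwordZ {A : Type*} (x : ℤ → A) (i : ℤ) (n : ℕ) : List A :=
  (List.range n).map fun j => x (i + (j : ℤ))

/-- `w` occurs in `x` at position `i`. -/
def occursAt {A : Type*} (x : ℤ → A) (w : List A) (i : ℤ) : Prop :=
  subwordZ x i w.length = w

/-- `w` is a factor of the bi-infinite word `x`. -/
def IsFactorZ {A : Type*} (x : ℤ → A) (w : List A) : Prop :=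
  ∃ i : ℤ, occursAt x w i

/-- `Γ` is a string attractor of the bi-infinite word `x`: every nonempty factor
has an occurrence crossing a position of `Γ`. -/
def IsAttractorZ {A : Type*} (x : ℤ → A) (Γ : Set ℤ) : Prop :=
  ∀ w : List A, w ≠ [] → IsFactorZ x w →
    ∃ i : ℤ, occursAt x w i ∧ ∃ p ∈ Γ, i ≤ p ∧ p < i + (w.length : ℤ)

/-- The span `sup Γ - inf Γ` of a set of integers (`⊤` when unbounded). -/
noncomputable def setSpan (Γ : Set ℤ) : ℕ∞ :=
  ⨆ a ∈ Γ, ⨆ b ∈ Γ, ((b - a).toNat : ℕ∞)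

/-- The string attractor span of a bi-infinite word. -/
noncomputable def wordSpan {A : Type*} (x : ℤ → A) : ℕ∞ :=
  ⨅ Γ ∈ {Γ : Set ℤ | IsAttractorZ x Γ}, setSpan Γ

/-- The factor complexity of a bi-infinite word. -/
noncomputable def complexityZ {A : Type*} (x : ℤ → A) (n : ℕ) : ℕ :=
  Nat.card {w : List A // w.length = n ∧ IsFactorZ x w}

/-- The shift `S^k`. -/
def shiftZ {A : Type*} (k : ℤ) (x : ℤ → A) : ℤ → A := fun i => x (i + k)

def PositivelyPeriodicZ {A : Type*} (x : ℤ → A) : Prop :=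
  ∃ (N : ℤ) (p : ℕ), 1 ≤ p ∧ ∀ n : ℤ, N ≤ n → x n = x (n + (p : ℤ))

def NegativelyPeriodicZ {A : Type*} (x : ℤ → A) : Prop :=
  ∃ (N : ℤ) (p : ℕ), 1 ≤ p ∧ ∀ n : ℤ, n ≤ N → x n = x (n - (p : ℤ))

def EventuallyPeriodicZ {A : Type*} (x : ℤ → A) : Prop :=
  PositivelyPeriodicZ x ∨ NegativelyPeriodicZ x

def AperiodicZ {A : Type*} (x : ℤ → A) : Prop := ¬ EventuallyPeriodicZ x

def PurelyPeriodicZ {A : Type*} (x : ℤ → A) : Prop :=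
  ∃ p : ℕ, 1 ≤ p ∧ ∀ n : ℤ, x n = x (n + (p : ℤ))

def LeftSpecialZ {A : Type*} (x : ℤ → A) (u : List A) : Prop :=
  ∃ a b : A, a ≠ b ∧ IsFactorZ x (a :: u) ∧ IsFactorZ x (b :: u)

def RightSpecialZ {A : Type*} (x : ℤ → A) (u : List A) : Prop :=
  ∃ a b : A, a ≠ b ∧ IsFactorZ x (u ++ [a]) ∧ IsFactorZ x (u ++ [b])

def BispecialZ {A : Type*} (x : ℤ → A) (u : List A) : Prop :=
  LeftSpecialZ x u ∧ RightSpecialZ x u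

/-- A bi-infinite word over `{0,1}` is Sturmian if it is aperiodic with complexity `n + 1`. -/
def SturmianZ (x : ℤ → Fin 2) : Prop :=
  AperiodicZ x ∧ ∀ n : ℕ, complexityZ x n = n + 1

/-- `x_{[-n, n+1]} = r_n(x) 01 l_n(x)` for all `n`. -/
def UpperCharacteristic (x : ℤ → Fin 2) : Prop :=
  SturmianZ x ∧ ∀ n : ℕ, ∃ r l : List (Fin 2),
    r.length = n ∧ RightSpecialZ x r ∧ l.length = n ∧ LeftSpecialZ x l ∧
    subwordZ x (-(n : ℤ)) (2 * n + 2) = r ++ [0, 1] ++ l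

/-- `x_{[-n, n+1]} = r_n(x) 10 l_n(x)` for all `n`. -/
def LowerCharacteristic (x : ℤ → Fin 2) : Prop :=
  SturmianZ x ∧ ∀ n : ℕ, ∃ r l : List (Fin 2),
    r.length = n ∧ RightSpecialZ x r ∧ l.length = n ∧ LeftSpecialZ x l ∧
    subwordZ x (-(n : ℤ)) (2 * n + 2) = r ++ [1, 0] ++ l

def CharacteristicSturmian (x : ℤ → Fin 2) : Prop :=
  UpperCharacteristic x ∨ LowerCharacteristic x

def QuasiSturmianZ {A : Type*} (x : ℤ → A) : Prop :=
  AperiodicZ x ∧ ∃ (n₀ k : ℕ), 1 ≤ k ∧ ∀ n : ℕ, n₀ ≤ n → complexityZ x n = n + k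

/-- Starting position in `φ(x)` of the image `φ(x_i)` (image of `x_0` starts at `0`). -/
def blockStart {A B : Type*} (φ : A → List B) (x : ℤ → A) (i : ℤ) : ℤ :=
  if 0 ≤ i then ((List.range i.toNat).map fun j => ((φ (x (j : ℤ))).length : ℤ)).sum
  else -((List.range (-i).toNat).map fun j => ((φ (x (-(j : ℤ) - 1))).length : ℤ)).sum

/-- `y` is the image of the bi-infinite word `x` under the substitution `φ`
(with images of letters nonempty). -/
def IsSubstImage {A B : Type*} (φ : A → List B) (x : ℤ → A) (y : ℤ → B) : Prop :=
  (∀ a : A, φ a ≠ []) ∧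
  ∀ i : ℤ, subwordZ y (blockStart φ x i) (φ (x i)).length = φ (x i)

/-- `φ_x(Γ)`: positions of `φ(x)` occupied by images of letters at positions in `Γ`. -/
def substSupp {A B : Type*} (φ : A → List B) (x : ℤ → A) (Γ : Set ℤ) : Set ℤ :=
  {n : ℤ | ∃ i ∈ Γ, blockStart φ x i ≤ n ∧ n < blockStart φ x i + ((φ (x i)).length : ℤ)}

/-- `φ_x^{-1}(Γ)`: positions of letters of `x` whose image blocks in `φ(x)` meet `Γ`. -/
def substPreimage {A B : Type*} (φ : A → List B) (x : ℤ → A) (Γ : Set ℤ) : Set ℤ :=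
  {i : ℤ | ∃ n ∈ Γ, blockStart φ x i ≤ n ∧ n < blockStart φ x i + ((φ (x i)).length : ℤ)}

/-- The set of occurrences of `w` in the finite word `u`. -/
def occSetF {B : Type*} (u w : List B) : Set ℕ :=
  {i : ℕ | i + w.length ≤ u.length ∧ (u.drop i).take w.length = w}

/-- `φ` is a return morphism for `w`. -/
def IsReturnMorphism {A B : Type*} (φ : A → List B) (w : List B) : Prop :=
  w ≠ [] ∧ Function.Injective φ ∧ (∀ a : A, φ a ≠ []) ∧
  ∀ a : A, occSetF (w ++ φ a) w = {0, (φ a).length}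

def listPow {A : Type*} (u : List A) : ℕ → List A
  | 0 => []
  | n + 1 => u ++ listPow u n

/-- A substitution on `{0,1}` is acyclic if `φ(0)` and `φ(1)` are not powers of one word. -/
def AcyclicSubst {A : Type*} (φ : Fin 2 → List A) : Prop :=
  ¬ ∃ (u : List A) (m n : ℕ), φ 0 = listPow u m ∧ φ 1 = listPow u n

/-- The substitution `L₀ : 0 ↦ 0, 1 ↦ 01`. -/
def Lzero : Fin 2 → List (Fin 2) := fun a => if a = 0 then [0] else [0, 1]

/-- The substitution `L₁ : 0 ↦ 10, 1 ↦ 1`. -/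
def Lone : Fin 2 → List (Fin 2) := fun a => if a = 0 then [1, 0] else [1]

/-- A finite word has period `r`. -/
def PeriodicF {A : Type*} (w : List A) (r : ℕ) : Prop :=
  ∀ i : ℕ, i + r < w.length → w[i]? = w[i + r]?

/-- `Γ` is a string attractor of the finite word `w`. -/
def IsAttractorF {A : Type*} (w : List A) (Γ : Set ℕ) : Prop :=
  ∀ u : List A, u ≠ [] → u <:+: w →
    ∃ i : ℕ, i + u.length ≤ w.length ∧ (w.drop i).take u.length = u ∧
      ∃ p ∈ Γ, i ≤ p ∧ p < i + u.length

def RecurrentZ {A : Type*} (x : ℤ → A) : Prop :=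
  ∀ w : List A, IsFactorZ x w → {i : ℤ | occursAt x w i}.Infinite

def UniformlyRecurrentZ {A : Type*} (x : ℤ → A) : Prop :=
  ∀ w : List A, IsFactorZ x w →
    ∃ n : ℕ, ∀ i : ℤ, ∃ j : ℤ, i ≤ j ∧ j + (w.length : ℤ) ≤ i + (n : ℤ) ∧ occursAt x w j

def ModuloRecurrentZ {A : Type*} (x : ℤ → A) : Prop :=
  ∀ w : List A, IsFactorZ x w → ∀ k : ℕ, 1 ≤ k → ∀ r : ℤ,
    ∃ i : ℤ, occursAt x w i ∧ (k : ℤ) ∣ (i - r)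

/-- A shift space: closed (product topology, `A` discrete) and shift-invariant. -/
def IsShiftSpace {A : Type*} (X : Set (ℤ → A)) : Prop :=
  @IsClosed _ (@Pi.topologicalSpace ℤ (fun _ => A) (fun _ => ⊥)) X ∧ shiftZ 1 '' X = X

def IsAttractorX {A : Type*} (X : Set (ℤ → A)) (Γ : Set ℤ) : Prop :=
  ∀ x ∈ X, IsAttractorZ x Γ

def MinimalShift {A : Type*} (X : Set (ℤ → A)) : Prop :=
  IsShiftSpace X ∧ ∀ Y ⊆ X, IsShiftSpace Y → Y = ∅ ∨ Y = X

/-- The orbit closure of a bi-infinite word (product topology, `A` discrete). -/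
def orbitClosureZ {A : Type*} (x : ℤ → A) : Set (ℤ → A) :=
  @closure _ (@Pi.topologicalSpace ℤ (fun _ => A) (fun _ => ⊥)) {y | ∃ k : ℤ, y = shiftZ k x}

/-!
Write `L_c` for `L₀` (`c = 0`) and `L₁` (`c = 1`): `L_c(c) = c` and `L_c(a) = c a` for
`a ≠ c`, and let `y = L_c(x)`. The letter `c` occurs in `y` exactly at the starts of the blocks
`L_c(x_i)`, so `x` can be decoded from `y`. Hence a period of `y` gives one of `x`, and every
right special factor of `y` is a suffix of `L_c(v) c` for a right special factor `v` of `x`.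
The right special factors of a Sturmian word are suffixes of one another, so the same holds in
`y`; over a binary alphabet `p(n + 1) = p(n) + #{right special factors of length n}`, which
gives `p_y(n) = n + 1`.

For the characteristic windows: if `x_{[-n,-1]}` is right special, `x_0 x_1 = ab` with `a ≠ b` and
`x_{[2,n+1]}` is left special, then the right special word `L_c(x_{[-n,-1]}) c` ends at position
`0` of `y`, `y_1 y_2 = x_0 x_1`, and the left special word `L_c(x_{[2,n+1]})` starts at position
`3`; these are the windows of `S y`.
-/

section Factors

variable {A : Type*} {x : ℤ → A}

-- `subwordZ` casts `List.range n` to `List ℤ` through the list monad; this undoes it.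
lemma subwordZ_eq_map (x : ℤ → A) (i : ℤ) (n : ℕ) :
    subwordZ x i n = (List.range n).map fun j : ℕ => x (i + j) := by
  simp [subwordZ, ← List.map_eq_flatMap, Function.comp_def]

@[simp] lemma length_subwordZ (x : ℤ → A) (i : ℤ) (n : ℕ) :
    (subwordZ x i n).length = n := by
  simp [subwordZ_eq_map]

lemma subwordZ_add (x : ℤ → A) (i : ℤ) (m n : ℕ) :
    subwordZ x i (m + n) = subwordZ x i m ++ subwordZ x (i + m) n := by
  simp only [subwordZ_eq_map, List.range_add, List.map_append, List.map_map]
  congr 2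
  funext j
  simp [add_assoc]

@[simp] lemma subwordZ_one (x : ℤ → A) (i : ℤ) : subwordZ x i 1 = [x i] := by
  simp [subwordZ_eq_map]

lemma occursAt_append_iff {u v : List A} {i : ℤ} :
    occursAt x (u ++ v) i ↔ occursAt x u i ∧ occursAt x v (i + u.length) := by
  simp only [occursAt, List.length_append, subwordZ_add]
  exact ⟨fun h => List.append_inj h (by simp), fun h => by rw [h.1, h.2]⟩

@[simp] lemma occursAt_singleton {a : A} {i : ℤ} : occursAt x [a] i ↔ x i = a := by
  simp [occursAt]

lemma occursAt_cons_iff {a : A} {u : List A} {i : ℤ} :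
    occursAt x (a :: u) i ↔ x i = a ∧ occursAt x u (i + 1) := by
  simpa using occursAt_append_iff (x := x) (u := [a]) (v := u) (i := i)

lemma occursAt_subwordZ (x : ℤ → A) (i : ℤ) (n : ℕ) : occursAt x (subwordZ x i n) i := by
  simp [occursAt]

lemma occursAt_append_right {w : List A} {i : ℤ} (h : occursAt x w i) :
    occursAt x (w ++ [x (i + w.length)]) i :=
  occursAt_append_iff.2 ⟨h, occursAt_singleton.2 rfl⟩

lemma IsFactorZ.of_prefix {u v : List A} (hv : IsFactorZ x v) (h : u <+: v) : IsFactorZ x u := by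
  obtain ⟨t, rfl⟩ := h
  obtain ⟨i, hi⟩ := hv
  exact ⟨i, (occursAt_append_iff.1 hi).1⟩

lemma IsFactorZ.of_suffix {u v : List A} (hv : IsFactorZ x v) (h : u <:+ v) : IsFactorZ x u := by
  obtain ⟨t, rfl⟩ := h
  obtain ⟨i, hi⟩ := hv
  exact ⟨_, (occursAt_append_iff.1 hi).2⟩

lemma subwordZ_shiftZ (k i : ℤ) (n : ℕ) : subwordZ (shiftZ k x) i n = subwordZ x (i + k) n := by
  simp only [subwordZ_eq_map, shiftZ, add_right_comm]

lemma occursAt_shiftZ {k : ℤ} {w : List A} {i : ℤ} :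
    occursAt (shiftZ k x) w i ↔ occursAt x w (i + k) := by
  rw [occursAt, occursAt, subwordZ_shiftZ]

lemma isFactorZ_shiftZ {k : ℤ} {w : List A} : IsFactorZ (shiftZ k x) w ↔ IsFactorZ x w :=
  ⟨fun ⟨i, hi⟩ => ⟨i + k, occursAt_shiftZ.1 hi⟩,
    fun ⟨i, hi⟩ => ⟨i - k, occursAt_shiftZ.2 (by rwa [sub_add_cancel])⟩⟩

end Factors

section Special

variable {A : Type*} {x : ℤ → A}

lemma RightSpecialZ.of_suffix {u v : List A} (hv : RightSpecialZ x v) (h : u <:+ v) :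
    RightSpecialZ x u := by
  obtain ⟨t, rfl⟩ := h
  obtain ⟨a, b, hab, ha, hb⟩ := hv
  exact ⟨a, b, hab, ha.of_suffix ⟨t, by simp⟩, hb.of_suffix ⟨t, by simp⟩⟩

lemma LeftSpecialZ.of_prefix {u v : List A} (hv : LeftSpecialZ x v) (h : u <+: v) :
    LeftSpecialZ x u := by
  obtain ⟨a, b, hab, ha, hb⟩ := hv
  exact ⟨a, b, hab, ha.of_prefix (List.cons_prefix_cons.2 ⟨rfl, h⟩),
    hb.of_prefix (List.cons_prefix_cons.2 ⟨rfl, h⟩)⟩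

lemma rightSpecialZ_shiftZ {k : ℤ} {w : List A} :
    RightSpecialZ (shiftZ k x) w ↔ RightSpecialZ x w := by
  simp only [RightSpecialZ, isFactorZ_shiftZ]

lemma leftSpecialZ_shiftZ {k : ℤ} {w : List A} :
    LeftSpecialZ (shiftZ k x) w ↔ LeftSpecialZ x w := by
  simp only [LeftSpecialZ, isFactorZ_shiftZ]

lemma RightSpecialZ.subwordZ {w : List A} {i : ℤ} {n : ℕ} (hw : RightSpecialZ x w)
    (hi : occursAt x w i) (hn : n ≤ w.length) :
    RightSpecialZ x (subwordZ x (i + (w.length - n : ℕ)) n) := by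
  obtain ⟨t, s, rfl, rfl⟩ : ∃ t s, w = t ++ s ∧ s.length = n :=
    ⟨w.take (w.length - n), w.drop (w.length - n), (List.take_append_drop ..).symm,
      by simp; omega⟩
  rw [List.length_append, Nat.add_sub_cancel, (occursAt_append_iff.1 hi).2]
  exact hw.of_suffix (List.suffix_append t s)

lemma LeftSpecialZ.subwordZ {w : List A} {i : ℤ} {n : ℕ} (hw : LeftSpecialZ x w)
    (hi : occursAt x w i) (hn : n ≤ w.length) : LeftSpecialZ x (subwordZ x i n) := by
  obtain ⟨s, t, rfl, rfl⟩ : ∃ s t, w = s ++ t ∧ s.length = n :=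
    ⟨w.take n, w.drop n, (List.take_append_drop ..).symm, by simpa⟩
  rw [(occursAt_append_iff.1 hi).1]
  exact hw.of_prefix (List.prefix_append s t)

end Special

section Binary

variable {x : ℤ → Fin 2}

lemma fin_two_eq_of_ne_of_ne {a b c : Fin 2} (ha : a ≠ c) (hb : b ≠ c) : a = b := by
  revert a b c; decide

lemma rightSpecialZ_iff {w : List (Fin 2)} :
    RightSpecialZ x w ↔ ∀ e, IsFactorZ x (w ++ [e]) := by
  refine ⟨fun ⟨a, b, hab, ha, hb⟩ e => ?_, fun h => ⟨0, 1, by decide, h 0, h 1⟩⟩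
  by_cases hea : e = a
  · exact hea ▸ ha
  · exact fin_two_eq_of_ne_of_ne hea (Ne.symm hab) ▸ hb

lemma leftSpecialZ_iff {w : List (Fin 2)} :
    LeftSpecialZ x w ↔ ∀ e, IsFactorZ x (e :: w) := by
  refine ⟨fun ⟨a, b, hab, ha, hb⟩ e => ?_, fun h => ⟨0, 1, by decide, h 0, h 1⟩⟩
  by_cases hea : e = a
  · exact hea ▸ ha
  · exact fin_two_eq_of_ne_of_ne hea (Ne.symm hab) ▸ hb

end Binary

section Shift

variable {A : Type*} {x : ℤ → A}

lemma PositivelyPeriodicZ.of_shiftZ {k : ℤ} (h : PositivelyPeriodicZ (shiftZ k x)) :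
    PositivelyPeriodicZ x := by
  obtain ⟨N, p, hp, hper⟩ := h
  refine ⟨N + k, p, hp, fun n hn => ?_⟩
  simpa [shiftZ, add_right_comm] using hper (n - k) (by omega)

lemma NegativelyPeriodicZ.of_shiftZ {k : ℤ} (h : NegativelyPeriodicZ (shiftZ k x)) :
    NegativelyPeriodicZ x := by
  obtain ⟨N, p, hp, hper⟩ := h
  refine ⟨N + k, p, hp, fun n hn => ?_⟩
  simpa [shiftZ, sub_add_eq_add_sub] using hper (n - k) (by omega)

lemma AperiodicZ.shiftZ (h : AperiodicZ x) (k : ℤ) : AperiodicZ (shiftZ k x) :=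
  fun hk => h (hk.imp PositivelyPeriodicZ.of_shiftZ NegativelyPeriodicZ.of_shiftZ)

end Shift

section Complexity

variable {x : ℤ → Fin 2}

lemma complexityZ_eq_ncard {A : Type*} (x : ℤ → A) (n : ℕ) :
    complexityZ x n = {w | w.length = n ∧ IsFactorZ x w}.ncard :=
  Nat.card_coe_set_eq _

lemma complexityZ_zero {A : Type*} (x : ℤ → A) : complexityZ x 0 = 1 := by
  have : {w : List A | w.length = 0 ∧ IsFactorZ x w} = {[]} := by
    ext w
    simp only [List.length_eq_zero_iff, Set.mem_ofPred_eq, Set.mem_singleton_iff,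
      and_iff_left_iff_imp]
    rintro rfl
    exact ⟨0, occursAt_subwordZ x 0 0⟩
  rw [complexityZ_eq_ncard, this, Set.ncard_singleton]

-- Each factor of length `n` has one or two right extensions, two exactly when it is right special.
lemma complexityZ_succ (x : ℤ → Fin 2) (n : ℕ) :
    complexityZ x (n + 1) = complexityZ x n + {w | w.length = n ∧ RightSpecialZ x w}.ncard := by
  set E : Fin 2 → Set (List (Fin 2)) := fun e => {u | u.length = n ∧ IsFactorZ x (u ++ [e])}
  have hfin : ∀ e, (E e).Finite := fun e =>
    (List.finite_length_eq (Fin 2) n).subset fun _ hu => hu.1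
  have hunion : E 0 ∪ E 1 = {w | w.length = n ∧ IsFactorZ x w} := by
    ext u
    refine ⟨fun h => ?_, fun ⟨hu, ⟨i, hi⟩⟩ => ?_⟩
    · rcases h with ⟨hu, hf⟩ | ⟨hu, hf⟩ <;>
        exact ⟨hu, hf.of_prefix (List.prefix_append ..)⟩
    · have hext : IsFactorZ x (u ++ [x (i + u.length)]) := ⟨i, occursAt_append_right hi⟩
      generalize x (i + u.length) = e at hext
      fin_cases e
      exacts [Or.inl ⟨hu, hext⟩, Or.inr ⟨hu, hext⟩]
  have hinter : E 0 ∩ E 1 = {w | w.length = n ∧ RightSpecialZ x w} := by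
    ext u
    simp only [E, Set.mem_inter_iff, Set.mem_ofPred_eq, rightSpecialZ_iff, Fin.forall_fin_two]
    tauto
  have hfactors : {w | w.length = n + 1 ∧ IsFactorZ x w} =
      (· ++ [0]) '' E 0 ∪ (· ++ [1]) '' E 1 := by
    ext w
    rcases w.eq_nil_or_concat with rfl | ⟨u, e, rfl⟩
    · simp
    · fin_cases e <;> simp [E]
  have hdisj : Disjoint ((· ++ [0]) '' E 0) ((· ++ [1]) '' E 1) := by
    rw [Set.disjoint_left]
    rintro _ ⟨u, -, rfl⟩ ⟨v, -, h⟩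
    simpa using (List.append_inj' h rfl).2
  rw [complexityZ_eq_ncard, complexityZ_eq_ncard, hfactors,
    Set.ncard_union_eq hdisj ((hfin 0).image _) ((hfin 1).image _),
    Set.ncard_image_of_injective _ (List.append_left_injective _),
    Set.ncard_image_of_injective _ (List.append_left_injective _),
    ← Set.ncard_union_add_ncard_inter _ _ (hfin 0) (hfin 1), hunion, hinter]

lemma complexityZ_eq_succ_iff :
    (∀ n, complexityZ x n = n + 1) ↔
      ∀ n, ∃! w : List (Fin 2), w.length = n ∧ RightSpecialZ x w := by
  have hone : ∀ n, {w | w.length = n ∧ RightSpecialZ x w}.ncard = 1 ↔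
      ∃! w : List (Fin 2), w.length = n ∧ RightSpecialZ x w :=
    fun n => Set.ncard_eq_one.trans Set.singleton_iff_unique_mem
  refine ⟨fun h n => (hone n).1 ?_, fun h n => ?_⟩
  · have := complexityZ_succ x n
    rw [h, h] at this
    omega
  · induction n with
    | zero => exact complexityZ_zero x
    | succ n ih => rw [complexityZ_succ, ih, (hone n).2 (h n)]

lemma RightSpecialZ.suffix_of_length_le (hx : ∀ n, complexityZ x n = n + 1)
    {u v : List (Fin 2)} (hu : RightSpecialZ x u) (hv : RightSpecialZ x v)
    (h : u.length ≤ v.length) : u <:+ v := by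
  have hs : RightSpecialZ x (v.drop (v.length - u.length)) := hv.of_suffix (List.drop_suffix ..)
  obtain ⟨w, -, hw⟩ := complexityZ_eq_succ_iff.1 hx u.length
  have : v.drop (v.length - u.length) = u :=
    (hw _ ⟨by simp; omega, hs⟩).trans (hw u ⟨rfl, hu⟩).symm
  exact this ▸ List.drop_suffix ..

end Complexity

section Substitution

variable {A B : Type*} {φ : A → List B} {x : ℤ → A} {y : ℤ → B}

lemma blockStart_natCast (φ : A → List B) (x : ℤ → A) (m : ℕ) :
    blockStart φ x m = ((List.range m).map fun j : ℕ => ((φ (x j)).length : ℤ)).sum := by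
  simp [blockStart, ← List.map_eq_flatMap, Function.comp_def]

lemma blockStart_neg_natCast (φ : A → List B) (x : ℤ → A) (m : ℕ) :
    blockStart φ x (-m) =
      -((List.range m).map fun j : ℕ => ((φ (x (-j - 1))).length : ℤ)).sum := by
  rcases m with _ | m
  · rfl
  simp [blockStart, ← List.map_eq_flatMap, Function.comp_def]
  omega

@[simp] lemma blockStart_zero (φ : A → List B) (x : ℤ → A) : blockStart φ x 0 = 0 := rfl

lemma blockStart_add_one (φ : A → List B) (x : ℤ → A) (i : ℤ) :
    blockStart φ x (i + 1) = blockStart φ x i + (φ (x i)).length := by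
  cases i with
  | ofNat m =>
    simp only [Int.ofNat_eq_natCast, ← Nat.cast_add_one, blockStart_natCast, List.range_succ]
    simp
  | negSucc m =>
    rw [Int.negSucc_eq, show -((m : ℤ) + 1) + 1 = -m by ring, ← Nat.cast_add_one,
      blockStart_neg_natCast, blockStart_neg_natCast, List.range_succ]
    simp [show -(m : ℤ) - 1 = -((m : ℤ) + 1) by ring]

lemma blockStart_sub_one (φ : A → List B) (x : ℤ → A) (i : ℤ) :
    blockStart φ x (i - 1) = blockStart φ x i - (φ (x (i - 1))).length := by
  rw [eq_sub_iff_add_eq, ← blockStart_add_one, sub_add_cancel]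

lemma blockStart_add_length {v : List A} {i : ℤ} (h : occursAt x v i) :
    blockStart φ x (i + v.length) = blockStart φ x i + (v.flatMap φ).length := by
  induction v generalizing i with
  | nil => simp
  | cons a v ih =>
    obtain ⟨rfl, hv⟩ := occursAt_cons_iff.1 h
    rw [List.length_cons, Nat.cast_add_one, add_comm (v.length : ℤ), ← add_assoc, ih hv,
      blockStart_add_one, List.flatMap_cons, List.length_append, Nat.cast_add, add_assoc]

lemma occursAt_flatMap (hxy : IsSubstImage φ x y) {v : List A} {i : ℤ} (h : occursAt x v i) :
    occursAt y (v.flatMap φ) (blockStart φ x i) := by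
  induction v generalizing i with
  | nil => simp [occursAt, subwordZ_eq_map]
  | cons a v ih =>
    obtain ⟨rfl, hv⟩ := occursAt_cons_iff.1 h
    rw [List.flatMap_cons, occursAt_append_iff, ← blockStart_add_one]
    exact ⟨hxy.2 i, ih hv⟩

lemma blockStart_lt_add_one (hφ : ∀ a, φ a ≠ []) (i : ℤ) :
    blockStart φ x i < blockStart φ x (i + 1) := by
  rw [blockStart_add_one]
  have := List.length_pos_iff.2 (hφ (x i))
  omega

lemma blockStart_strictMono (hφ : ∀ a, φ a ≠ []) : StrictMono (blockStart φ x) :=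
  strictMono_int_of_lt_succ (blockStart_lt_add_one hφ)

lemma exists_blockStart_le_lt (hφ : ∀ a, φ a ≠ []) (m : ℤ) :
    ∃ i, blockStart φ x i ≤ m ∧ m < blockStart φ x (i + 1) := by
  induction m using Int.induction_on with
  | zero => exact ⟨0, le_rfl, blockStart_lt_add_one hφ 0⟩
  | succ m ih =>
    obtain ⟨i, h1, h2⟩ := ih
    by_cases h : m + 1 < blockStart φ x (i + 1)
    · exact ⟨i, by omega, h⟩
    · exact ⟨i + 1, by omega, by have := blockStart_lt_add_one (x := x) hφ (i + 1); omega⟩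
  | pred m ih =>
    obtain ⟨i, h1, h2⟩ := ih
    by_cases h : blockStart φ x i ≤ -m - 1
    · exact ⟨i, h, by omega⟩
    · refine ⟨i - 1, ?_, by rw [sub_add_cancel]; omega⟩
      have := blockStart_lt_add_one (x := x) hφ (i - 1)
      rw [sub_add_cancel] at this
      omega

lemma length_le_length_flatMap (hφ : ∀ a, φ a ≠ []) (v : List A) :
    v.length ≤ (v.flatMap φ).length := by
  induction v with
  | nil => simp
  | cons a v ih =>
    have := List.length_pos_iff.2 (hφ a)
    simp only [List.flatMap_cons, List.length_append, List.length_cons]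
    omega

lemma exists_eq_flatMap_of_occursAt (hxy : IsSubstImage φ x y) {w : List B} {i j : ℤ}
    (hw : occursAt y w (blockStart φ x i))
    (hj : blockStart φ x i + w.length = blockStart φ x j) :
    ∃ v, occursAt x v i ∧ w = v.flatMap φ := by
  have hij : i ≤ j := (blockStart_strictMono (x := x) hxy.1).le_iff_le.1 (by omega)
  set v := subwordZ x i (j - i).toNat
  have hv : occursAt x v i := occursAt_subwordZ x i _
  have hlen := blockStart_add_length (φ := φ) hv
  rw [length_subwordZ, Int.toNat_of_nonneg (by omega), add_sub_cancel, ← hj] at hlen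
  refine ⟨v, hv, ?_⟩
  rw [← hw, ← occursAt_flatMap hxy hv, show w.length = (v.flatMap φ).length by omega]

end Substitution

def substL (c : Fin 2) : Fin 2 → List (Fin 2) := fun a => if a = c then [c] else [c, a]

lemma Lzero_eq_substL : Lzero = substL 0 := by
  funext a; fin_cases a <;> rfl

lemma Lone_eq_substL : Lone = substL 1 := by
  funext a; fin_cases a <;> rfl

section SubstL

variable {c : Fin 2}

@[simp] lemma substL_self (c : Fin 2) : substL c c = [c] := if_pos rfl

@[simp] lemma substL_of_ne {a : Fin 2} (h : a ≠ c) : substL c a = [c, a] := if_neg h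

lemma substL_ne_nil (c a : Fin 2) : substL c a ≠ [] := by
  unfold substL; split_ifs <;> simp

lemma eq_of_flatMap_substL_eq_cons {u v : List (Fin 2)} {b : Fin 2}
    (h : u.flatMap (substL c) = b :: v) : b = c := by
  rcases u with _ | ⟨a, u⟩
  · simp at h
  · by_cases ha : a = c <;> simp_all

lemma flatMap_substL_injective (c : Fin 2) :
    Function.Injective fun v : List (Fin 2) => v.flatMap (substL c) := by
  intro u v h
  induction u generalizing v with
  | nil => rcases v with _ | ⟨b, v⟩ <;> simp_all [substL_ne_nil]
  | cons a u ih =>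
    rcases v with _ | ⟨b, v⟩
    · simp [substL_ne_nil] at h
    simp only [List.flatMap_cons] at h
    by_cases ha : a = c <;> by_cases hb : b = c
    · simp only [ha, hb, substL_self, List.singleton_append, List.cons.injEq, true_and] at h
      rw [ha, hb, ih h]
    · have h' : u.flatMap (substL c) = b :: v.flatMap (substL c) := by simpa [ha, hb] using h
      exact absurd (eq_of_flatMap_substL_eq_cons h') hb
    · have h' : v.flatMap (substL c) = a :: u.flatMap (substL c) := by simpa [ha, hb] using h.symm
      exact absurd (eq_of_flatMap_substL_eq_cons h') ha
    · simp only [substL_of_ne ha, substL_of_ne hb, List.cons_append, List.cons.injEq] at h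
      rw [h.2.1, ih h.2.2]

end SubstL

section ImageSubstL

variable {c : Fin 2} {x y : ℤ → Fin 2}

local notation "β" => blockStart (substL c) x

lemma blockStart_substL_eq_or (m : ℤ) :
    ∃ k, m = β k ∨ (m = β k + 1 ∧ x k ≠ c ∧ β (k + 1) = m + 1) := by
  obtain ⟨k, h₁, h₂⟩ := exists_blockStart_le_lt (substL_ne_nil c) (x := x) m
  refine ⟨k, ?_⟩
  rw [blockStart_add_one] at h₂ ⊢
  by_cases hk : x k = c
  · simp only [hk, substL_self, List.length_singleton] at h₂
    omega
  · simp only [substL_of_ne hk, List.length_cons, List.length_nil] at h₂ ⊢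
    omega

variable (hxy : IsSubstImage (substL c) x y)
include hxy

lemma apply_blockStart (i : ℤ) : y (β i) = c := by
  have h : occursAt y (substL c (x i)) (β i) := hxy.2 i
  by_cases hx : x i = c
  · simpa [hx] using h
  · rw [substL_of_ne hx] at h
    exact (occursAt_cons_iff.1 h).1

lemma apply_blockStart_add_one (i : ℤ) : y (β i + 1) = x i := by
  by_cases hx : x i = c
  · have h := apply_blockStart hxy (i + 1)
    rw [blockStart_add_one, hx, substL_self] at h
    simpa [hx] using h
  · have h : occursAt y [c, x i] (β i) := substL_of_ne hx ▸ hxy.2 i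
    simpa using (occursAt_cons_iff.1 (occursAt_cons_iff.1 h).2).1

lemma apply_blockStart_sub_one (i : ℤ) : y (β i - 1) = x (i - 1) := by
  rw [← sub_add_cancel i 1, blockStart_add_one, add_sub_cancel_right]
  by_cases hx : x (i - 1) = c
  · simp [hx, apply_blockStart hxy]
  · simp only [substL_of_ne hx, List.length_cons, List.length_nil]
    rw [← apply_blockStart_add_one hxy]
    congr 1
    omega

lemma exists_blockStart_eq_of_apply_eq {m : ℤ} (h : y m = c) : ∃ k, β k = m := by
  obtain ⟨k, rfl | ⟨rfl, hk, -⟩⟩ := blockStart_substL_eq_or (c := c) (x := x) m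
  · exact ⟨k, rfl⟩
  · exact absurd (apply_blockStart_add_one hxy k ▸ h) hk

lemma exists_blockStart_eq_of_apply_ne {m : ℤ} (h : y m ≠ c) :
    ∃ k, β k = m - 1 ∧ β (k + 1) = m + 1 := by
  obtain ⟨k, rfl | ⟨rfl, -, hk⟩⟩ := blockStart_substL_eq_or (c := c) (x := x) m
  · exact absurd (apply_blockStart hxy k) h
  · exact ⟨k, by ring, hk⟩

lemma occursAt_flatMap_substL_append {v : List (Fin 2)} {i : ℤ} (h : occursAt x v i) :
    occursAt y (v.flatMap (substL c) ++ [c]) (β i) :=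
  occursAt_append_iff.2 ⟨occursAt_flatMap hxy h,
    occursAt_singleton.2 (blockStart_add_length h ▸ apply_blockStart hxy _)⟩

lemma RightSpecialZ.flatMap_substL {v : List (Fin 2)} (hv : RightSpecialZ x v) :
    RightSpecialZ y (v.flatMap (substL c) ++ [c]) := by
  refine rightSpecialZ_iff.2 fun e => ?_
  obtain ⟨i, hi⟩ := rightSpecialZ_iff.1 hv e
  by_cases he : e = c
  · subst he
    exact ⟨_, by simpa using occursAt_flatMap_substL_append hxy hi⟩
  · exact ⟨_, by simpa [he] using occursAt_flatMap hxy hi⟩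

lemma LeftSpecialZ.flatMap_substL {v : List (Fin 2)} (hv : LeftSpecialZ x v) :
    LeftSpecialZ y (v.flatMap (substL c)) := by
  refine leftSpecialZ_iff.2 fun e => ?_
  obtain ⟨i, hi⟩ := leftSpecialZ_iff.1 hv e
  have hF : IsFactorZ y ((e :: v).flatMap (substL c)) := ⟨_, occursAt_flatMap hxy hi⟩
  by_cases he : e = c
  · simpa [he] using hF
  · exact IsFactorZ.of_suffix (by simpa [he] using hF) (List.suffix_cons c _)

lemma exists_eq_flatMap_of_occursAt_append_self {w : List (Fin 2)} {i : ℤ}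
    (h : occursAt y (w ++ [c]) (β i)) :
    ∃ u, occursAt x u i ∧ w = u.flatMap (substL c) := by
  obtain ⟨hw, hc⟩ := occursAt_append_iff.1 h
  obtain ⟨j, hj⟩ := exists_blockStart_eq_of_apply_eq hxy (occursAt_singleton.1 hc)
  exact exists_eq_flatMap_of_occursAt hxy hw hj.symm

lemma exists_eq_flatMap_of_occursAt_append_ne {w : List (Fin 2)} {i : ℤ} {d : Fin 2}
    (hd : d ≠ c) (h : occursAt y (w ++ [d]) (β i)) :
    ∃ v, occursAt x (v ++ [d]) i ∧ w = v.flatMap (substL c) ++ [c] := by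
  obtain ⟨k, -, hk⟩ := exists_blockStart_eq_of_apply_ne hxy
    (occursAt_singleton.1 (occursAt_append_iff.1 h).2 ▸ hd)
  obtain ⟨v', hv', hw⟩ := exists_eq_flatMap_of_occursAt hxy h (j := k + 1)
    (by rw [hk, List.length_append, List.length_singleton]; push_cast; ring)
  rcases v'.eq_nil_or_concat with rfl | ⟨v, e, rfl⟩
  · simp at hw
  rw [List.concat_eq_append] at hw hv'
  rw [List.flatMap_append, List.flatMap_singleton] at hw
  have he : e ≠ c := by
    rintro rfl
    rw [substL_self] at hw
    exact hd (List.singleton_inj.1 (List.append_inj' hw rfl).2)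
  rw [substL_of_ne he, show [c, e] = [c] ++ [e] from rfl, ← List.append_assoc] at hw
  obtain ⟨hwv, hde⟩ := List.append_inj' hw rfl
  obtain rfl := List.singleton_inj.1 hde
  exact ⟨v, hv', hwv⟩

lemma RightSpecialZ.exists_eq_flatMap_substL {w : List (Fin 2)} (hw : RightSpecialZ y (c :: w)) :
    ∃ v, RightSpecialZ x v ∧ c :: w = v.flatMap (substL c) ++ [c] := by
  obtain ⟨d, hd⟩ : ∃ d : Fin 2, d ≠ c := ⟨c + 1, by fin_cases c <;> decide⟩
  obtain ⟨m₁, h₁⟩ := rightSpecialZ_iff.1 hw c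
  obtain ⟨m₂, h₂⟩ := rightSpecialZ_iff.1 hw d
  obtain ⟨i₁, rfl⟩ := exists_blockStart_eq_of_apply_eq hxy (occursAt_cons_iff.1 h₁).1
  obtain ⟨i₂, rfl⟩ := exists_blockStart_eq_of_apply_eq hxy (occursAt_cons_iff.1 h₂).1
  obtain ⟨u, hu, hwu⟩ := exists_eq_flatMap_of_occursAt_append_self hxy h₁
  obtain ⟨v, hv, hwv⟩ := exists_eq_flatMap_of_occursAt_append_ne hxy hd h₂
  have huv : u = v ++ [c] := flatMap_substL_injective c (by simp [← hwu, hwv])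
  exact ⟨v, ⟨c, d, hd.symm, ⟨i₁, huv ▸ hu⟩, ⟨i₂, hv⟩⟩, hwv⟩

-- Every occurrence of a letter `d ≠ c` in `y` is preceded by `c`.
lemma RightSpecialZ.cons_substL {d : Fin 2} {w : List (Fin 2)} (hd : d ≠ c)
    (hw : RightSpecialZ y (d :: w)) : RightSpecialZ y (c :: d :: w) := by
  refine rightSpecialZ_iff.2 fun e => ?_
  obtain ⟨m, hm⟩ := rightSpecialZ_iff.1 hw e
  obtain ⟨k, hk, -⟩ := exists_blockStart_eq_of_apply_ne hxy ((occursAt_cons_iff.1 hm).1 ▸ hd)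
  refine ⟨m - 1, occursAt_cons_iff.2 ⟨hk ▸ apply_blockStart hxy k, ?_⟩⟩
  rwa [sub_add_cancel]

lemma RightSpecialZ.exists_suffix_flatMap_substL {w : List (Fin 2)} (hw : RightSpecialZ y w)
    (hne : w ≠ []) : ∃ v, RightSpecialZ x v ∧ w <:+ v.flatMap (substL c) ++ [c] := by
  obtain ⟨e, w, rfl⟩ := List.exists_cons_of_ne_nil hne
  by_cases he : e = c
  · subst he
    obtain ⟨v, hv, hwv⟩ := hw.exists_eq_flatMap_substL hxy
    exact ⟨v, hv, hwv ▸ List.suffix_refl _⟩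
  · obtain ⟨v, hv, hwv⟩ := (hw.cons_substL hxy he).exists_eq_flatMap_substL hxy
    exact ⟨v, hv, hwv ▸ List.suffix_cons c _⟩

lemma RightSpecialZ.eq_of_length_eq_of_isSubstImage (hx : ∀ n, complexityZ x n = n + 1)
    {w w' : List (Fin 2)} (hw : RightSpecialZ y w) (hw' : RightSpecialZ y w')
    (h : w.length = w'.length) : w = w' := by
  rcases w with _ | ⟨e, w⟩
  · exact (List.length_eq_zero_iff.1 h.symm).symm
  obtain ⟨v, hv, hwv⟩ := hw.exists_suffix_flatMap_substL hxy (List.cons_ne_nil e w)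
  obtain ⟨v', hv', hwv'⟩ := hw'.exists_suffix_flatMap_substL hxy (List.ne_nil_of_length_pos
    (by simp [← h]))
  have himage : ∀ {v v' : List (Fin 2)}, v <:+ v' →
      v.flatMap (substL c) ++ [c] <:+ v'.flatMap (substL c) ++ [c] := by
    rintro _ _ ⟨t, rfl⟩
    exact ⟨t.flatMap (substL c), by simp⟩
  rcases le_total v.length v'.length with hle | hle
  · have := hwv.trans (himage (hv.suffix_of_length_le hx hv' hle))
    exact (List.suffix_of_suffix_length_le this hwv' h.le).eq_of_length h
  · have := hwv'.trans (himage (hv'.suffix_of_length_le hx hv hle))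
    exact (List.suffix_of_suffix_length_le hwv this h.le).eq_of_length h

lemma complexityZ_of_isSubstImage_substL (hx : ∀ n, complexityZ x n = n + 1) (n : ℕ) :
    complexityZ y n = n + 1 := by
  refine complexityZ_eq_succ_iff.2 (fun n => ?_) n
  obtain ⟨r, ⟨hr, hrs⟩, -⟩ := complexityZ_eq_succ_iff.1 hx n
  set W := r.flatMap (substL c) ++ [c]
  have hW : n + 1 ≤ W.length := by
    simpa [W, hr] using length_le_length_flatMap (substL_ne_nil c) r
  have hlen : (W.drop (W.length - n)).length = n := by simp; omega
  have hs : RightSpecialZ y (W.drop (W.length - n)) :=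
    (hrs.flatMap_substL hxy).of_suffix (List.drop_suffix ..)
  exact ⟨_, ⟨hlen, hs⟩, fun u hu =>
    hu.2.eq_of_length_eq_of_isSubstImage hxy hx hs (hu.1.trans hlen.symm)⟩

-- The block starts of `y` are the positions of `c`, so a period of `y` shifts the blocks
-- by a fixed number `q` of positions, which is then a period of `x`.
lemma PositivelyPeriodicZ.of_isSubstImage_substL (hy : PositivelyPeriodicZ y) :
    PositivelyPeriodicZ x := by
  have hmono := blockStart_strictMono (substL_ne_nil c) (x := x)
  obtain ⟨N, p, hp, hper⟩ := hy
  obtain ⟨i₀, -, hi₀⟩ := exists_blockStart_le_lt (substL_ne_nil c) (x := x) N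
  obtain ⟨i₁, hi₁⟩ := exists_blockStart_eq_of_apply_eq hxy (m := β (i₀ + 1) + p)
    (by rw [← hper _ hi₀.le, apply_blockStart hxy])
  have hq : i₀ + 1 < i₁ := hmono.lt_iff_lt.1 (by omega)
  set q := i₁ - (i₀ + 1)
  have hx : ∀ i, i₀ + 1 ≤ i → β (i + q) = β i + p → x (i + q) = x i := fun i hi hb => by
    rw [← apply_blockStart_add_one hxy, ← apply_blockStart_add_one hxy, hb, add_right_comm,
      ← hper _ (by have := hmono.monotone hi; omega)]
  have hb : ∀ i, i₀ + 1 ≤ i → β (i + q) = β i + p := by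
    intro i hi
    induction i, hi using Int.leInduction with
    | base => rw [← hi₁]; congr 1; omega
    | succ i hi ih =>
      rw [add_right_comm, blockStart_add_one, blockStart_add_one, ih, hx i hi ih]
      ring
  refine ⟨i₀ + 1, q.toNat, by omega, fun i hi => ?_⟩
  rw [Int.toNat_of_nonneg (by omega), hx i hi (hb i hi)]

lemma NegativelyPeriodicZ.of_isSubstImage_substL (hy : NegativelyPeriodicZ y) :
    NegativelyPeriodicZ x := by
  have hmono := blockStart_strictMono (substL_ne_nil c) (x := x)
  obtain ⟨N, p, hp, hper⟩ := hy
  obtain ⟨i₀, hi₀, -⟩ := exists_blockStart_le_lt (substL_ne_nil c) (x := x) N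
  obtain ⟨i₁, hi₁⟩ := exists_blockStart_eq_of_apply_eq hxy (m := β i₀ - p)
    (by rw [← hper _ hi₀, apply_blockStart hxy])
  have hq : i₁ < i₀ := hmono.lt_iff_lt.1 (by omega)
  set q := i₀ - i₁
  have hx : ∀ i ≤ i₀, β (i - q) = β i - p → x (i - q - 1) = x (i - 1) := fun i hi hb => by
    rw [← apply_blockStart_sub_one hxy, ← apply_blockStart_sub_one hxy, hb, sub_right_comm,
      ← hper _ (by have := hmono.monotone hi; omega)]
  have hb : ∀ i ≤ i₀, β (i - q) = β i - p := by
    intro i hi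
    induction i, hi using Int.leInductionDown with
    | base => rw [← hi₁]; congr 1; omega
    | pred i hi ih =>
      rw [sub_right_comm, blockStart_sub_one, blockStart_sub_one, ih, hx i hi ih]
      ring
  refine ⟨i₀ - 1, q.toNat, by omega, fun i hi => ?_⟩
  have := hx (i + 1) (by omega) (hb (i + 1) (by omega))
  rw [add_sub_cancel_right, add_sub_right_comm, add_sub_cancel_right] at this
  rw [Int.toNat_of_nonneg (by omega), this]

end ImageSubstL

lemma SturmianZ.shiftZ {x : ℤ → Fin 2} (h : SturmianZ x) (k : ℤ) :
    SturmianZ (shiftZ k x) := by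
  refine ⟨h.1.shiftZ k, fun n => ?_⟩
  simp only [complexityZ, isFactorZ_shiftZ]
  exact h.2 n

lemma SturmianZ.of_isSubstImage_substL {c : Fin 2} {x y : ℤ → Fin 2} (hx : SturmianZ x)
    (hxy : IsSubstImage (substL c) x y) : SturmianZ y :=
  ⟨fun hy => hx.1 (hy.imp (·.of_isSubstImage_substL hxy) (·.of_isSubstImage_substL hxy)),
    complexityZ_of_isSubstImage_substL hxy hx.2⟩

/-- Characteristic words with central factor `ab`, where `r_n = x_{[-n,-1]}` and
`l_n = x_{[2,n+1]}`. -/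
def CharacteristicWith (a b : Fin 2) (x : ℤ → Fin 2) : Prop :=
  SturmianZ x ∧ x 0 = a ∧ x 1 = b ∧ (∀ n : ℕ, RightSpecialZ x (subwordZ x (-n) n)) ∧
    ∀ n : ℕ, LeftSpecialZ x (subwordZ x 2 n)

section Characteristic

variable {a b : Fin 2} {x : ℤ → Fin 2}

lemma subwordZ_central (x : ℤ → Fin 2) (n : ℕ) :
    subwordZ x (-n) (2 * n + 2) = subwordZ x (-n) n ++ [x 0, x 1] ++ subwordZ x 2 n := by
  rw [show 2 * n + 2 = n + 1 + 1 + n by ring, subwordZ_add, subwordZ_add, subwordZ_add]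
  simp only [subwordZ_one, List.append_assoc, List.cons_append, List.nil_append]
  congr 4 <;> push_cast <;> ring

lemma characteristicWith_iff :
    (SturmianZ x ∧ ∀ n : ℕ, ∃ r l : List (Fin 2), r.length = n ∧ RightSpecialZ x r ∧
      l.length = n ∧ LeftSpecialZ x l ∧
      subwordZ x (-(n : ℤ)) (2 * n + 2) = r ++ [a, b] ++ l) ↔
      CharacteristicWith a b x := by
  refine ⟨fun ⟨hx, h⟩ => ?_, fun ⟨hx, ha, hb, hr, hl⟩ => ⟨hx, fun n => ?_⟩⟩
  · have hn : ∀ n : ℕ, (x 0 = a ∧ x 1 = b) ∧ RightSpecialZ x (subwordZ x (-n) n) ∧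
        LeftSpecialZ x (subwordZ x 2 n) := fun n => by
      obtain ⟨r, l, hr, hrs, hl, hls, hwin⟩ := h n
      rw [subwordZ_central] at hwin
      obtain ⟨hleft, rfl⟩ := List.append_inj hwin (by simp [hr])
      obtain ⟨rfl, hab⟩ := List.append_inj hleft (by simp [hr])
      simp only [List.cons.injEq, and_true] at hab
      exact ⟨hab, hrs, hls⟩
    exact ⟨hx, (hn 0).1.1, (hn 0).1.2, fun n => (hn n).2.1, fun n => (hn n).2.2⟩
  · exact ⟨_, _, length_subwordZ .., hr n, length_subwordZ .., hl n,
      by rw [subwordZ_central, ha, hb]⟩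

end Characteristic

section CharacteristicImage

variable {c : Fin 2} {x y : ℤ → Fin 2}

lemma blockStart_substL_two (h : x 0 ≠ x 1) : blockStart (substL c) x 2 = 3 := by
  rw [show (2 : ℤ) = 0 + 1 + 1 by norm_num, blockStart_add_one, blockStart_add_one]
  by_cases h₀ : x 0 = c
  · simp [h₀, substL_of_ne (h₀ ▸ h).symm]
  · simp [h₀, fin_two_eq_of_ne_of_ne (Ne.symm h) (Ne.symm h₀)]

lemma CharacteristicWith.image_substL {a b : Fin 2} (hx : CharacteristicWith a b x) (hab : a ≠ b)
    (hxy : IsSubstImage (substL c) x y) : CharacteristicWith a b (shiftZ 1 y) := by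
  obtain ⟨hst, rfl, rfl, hr, hl⟩ := hx
  have h₂ := blockStart_substL_two (c := c) hab
  refine ⟨(hst.of_isSubstImage_substL hxy).shiftZ 1, ?_, ?_, fun n => ?_, fun n => ?_⟩
  · simpa [shiftZ] using apply_blockStart_add_one hxy 0
  · simpa [shiftZ, h₂] using apply_blockStart_sub_one hxy 2
  · have hocc := occursAt_flatMap_substL_append hxy (occursAt_subwordZ x (-n) n)
    have hend := blockStart_add_length (φ := substL c) (occursAt_subwordZ x (-n) n)
    have hlen := length_le_length_flatMap (substL_ne_nil c) (subwordZ x (-n) n)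
    rw [length_subwordZ, neg_add_cancel, blockStart_zero] at hend
    rw [length_subwordZ] at hlen
    have := ((hr n).flatMap_substL hxy).subwordZ hocc (n := n)
      (by rw [List.length_append, List.length_singleton]; omega)
    rw [List.length_append, List.length_singleton,
      show _ + ((_ + 1 - n : ℕ) : ℤ) = -n + 1 by omega] at this
    rwa [subwordZ_shiftZ, rightSpecialZ_shiftZ]
  · have hocc := occursAt_flatMap hxy (occursAt_subwordZ x 2 n)
    have hlen := length_le_length_flatMap (substL_ne_nil c) (subwordZ x 2 n)
    have := ((hl n).flatMap_substL hxy).subwordZ hocc (n := n) (by simpa using hlen)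
    rw [subwordZ_shiftZ, leftSpecialZ_shiftZ]
    rwa [h₂] at this

end CharacteristicImage

/-- If `x` is an upper (resp. lower) characteristic Sturmian word, then
`S(L₀(x))` and `S(L₁(x))` are upper (resp. lower) characteristic Sturmian words. -/
theorem characteristic_image_L0_L1 (x : ℤ → Fin 2) :
    (UpperCharacteristic x →
      ∀ y : ℤ → Fin 2, IsSubstImage Lzero x y → UpperCharacteristic (shiftZ 1 y)) ∧
    (UpperCharacteristic x →
      ∀ y : ℤ → Fin 2, IsSubstImage Lone x y → UpperCharacteristic (shiftZ 1 y)) ∧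
    (LowerCharacteristic x →
      ∀ y : ℤ → Fin 2, IsSubstImage Lzero x y → LowerCharacteristic (shiftZ 1 y)) ∧
    (LowerCharacteristic x →
      ∀ y : ℤ → Fin 2, IsSubstImage Lone x y → LowerCharacteristic (shiftZ 1 y)) := by
  rw [Lzero_eq_substL, Lone_eq_substL]
  refine ⟨?_, ?_, ?_, ?_⟩ <;> intro hx y hxy <;>
    exact characteristicWith_iff.2 ((characteristicWith_iff.1 hx).image_substL (by decide) hxy)
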